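/- Let f_n be the solutions of the integral-difference equation: f₁(s) = (3 − s)/s for 1 ≤ s ≤ 3 and f₁(s) = 0 for s > 3; for n ≥ 2, if n is even and s ≥ 2, or n is odd and s ≥ 3, then s·f_n(s) = ∫_s^∞ f_{n−1}(t−1) dt; if n is odd and 1 ≤ s ≤ 3, then s·f_n(s) = 3·f_n(3) = ∫_3^∞ f_{n−1}(t−1) dt. Then for every n ≥ 1, f_n(s) ≤ 2e²·(0.9214)^{n−1}·h(s), valid for all s ≥ 1 when n is odd and for all s ≥ 2 when n is even. -/

import Mathlib

open Real

/-- The function `h(s)`: `e⁻²` for `1 ≤ s ≤ 2`, `e⁻ˢ` for `2 ≤ s ≤ 3`,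
and `3 s⁻¹ e⁻ˢ` for `s ≥ 3`. -/
noncomputable def hfun (s : ℝ) : ℝ :=
  if s ≤ 2 then Real.exp (-2) else if s ≤ 3 then Real.exp (-s) else 3 / s * Real.exp (-s)

/-!
Write `K_n = 2 e² q^{n-1}` with `q = 0.9214`. One proves by induction the sharper bounds
`f_n ≤ K_n · M_odd` on `[1, ∞)` for odd `n` and `f_n ≤ K_n · M_even` on `[2, ∞)` for even `n`,
where `M_odd(s) = e⁻²/s` and `M_even(s) = e⁻ˢ` for `s ≤ 3`, both continued by `e^{1 - 4s/3}`.
Feeding such a bound for `f_{n-1}` into `s f_n(s) = ∫_{s-1}^∞ f_{n-1}` reduces the induction step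
to the explicit inequalities `∫_{s-1}^∞ M_odd ≤ q s M_even(s)` (`s ≥ 2`) and
`∫_{s-1}^∞ M_even ≤ q s M_odd(s)` (`s ≥ 3`); on `[1, 3]` the odd case propagates through
`s f_n(s) = 3 f_n(3)` because `s M_odd(s)` is constant there. Both majorants lie below `h`.
-/

open MeasureTheory Set

theorem integral_comp_sub_right_Ioi {E : Type*} [NormedAddCommGroup E] [NormedSpace ℝ E]
    (g : ℝ → E) (a d : ℝ) : ∫ x in Ioi a, g (x - d) = ∫ x in Ioi (a - d), g x := by
  rw [← integral_indicator measurableSet_Ioi, ← integral_indicator measurableSet_Ioi,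
    ← integral_sub_right_eq_self ((Ioi (a - d)).indicator g) d]
  congr 1 with x
  simp only [indicator, mem_Ioi, sub_lt_sub_iff_right]

theorem setIntegral_le_of_le_of_nonneg {α : Type*} [MeasurableSpace α] {μ : Measure α}
    {f g : α → ℝ} {s : Set α} (hs : MeasurableSet s) (hg : IntegrableOn g s μ)
    (hg0 : ∀ x ∈ s, 0 ≤ g x) (hfg : ∀ x ∈ s, f x ≤ g x) :
    ∫ x in s, f x ∂μ ≤ ∫ x in s, g x ∂μ := by
  by_cases hf : IntegrableOn f s μ
  · exact setIntegral_mono_on hf hg hs hfg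
  · rw [integral_undef hf]
    exact setIntegral_nonneg hs hg0

theorem integral_comp_sub_one_le_mul_integral {f M : ℝ → ℝ} {C s : ℝ} (hC : 0 ≤ C)
    (hM : IntegrableOn M (Ioi (s - 1))) (hM0 : ∀ u ∈ Ioi (s - 1), 0 ≤ M u)
    (hfM : ∀ u ∈ Ioi (s - 1), f u ≤ C * M u) :
    ∫ t in Ioi s, f (t - 1) ≤ C * ∫ u in Ioi (s - 1), M u := by
  rw [integral_comp_sub_right_Ioi, ← integral_const_mul]
  exact setIntegral_le_of_le_of_nonneg measurableSet_Ioi (hM.const_mul C)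
    (fun u hu => mul_nonneg hC (hM0 u hu)) hfM

theorem exp_one_sub_four_mul_div_three (u : ℝ) :
    exp (1 - 4 * u / 3) = exp 1 * exp (-(4 / 3) * u) := by
  rw [← exp_add]; ring_nf

theorem integrableOn_exp_one_sub_Ioi (a : ℝ) :
    IntegrableOn (fun u => exp (1 - 4 * u / 3)) (Ioi a) := by
  simp only [exp_one_sub_four_mul_div_three]
  exact (integrableOn_exp_mul_Ioi (by norm_num) a).const_mul _

theorem integral_exp_one_sub_Ioi (a : ℝ) :
    ∫ u in Ioi a, exp (1 - 4 * u / 3) = 3 / 4 * exp (1 - 4 * a / 3) := by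
  simp only [exp_one_sub_four_mul_div_three]
  rw [integral_const_mul, integral_exp_mul_Ioi (by norm_num)]
  ring

noncomputable def majorant (φ : ℝ → ℝ) (s : ℝ) : ℝ :=
  if s ≤ 3 then φ s else exp (1 - 4 * s / 3)

noncomputable def oddMajorant : ℝ → ℝ := majorant fun s => exp (-2) / s

noncomputable def evenMajorant : ℝ → ℝ := majorant fun s => exp (-s)

theorem majorant_of_le (φ : ℝ → ℝ) {s : ℝ} (hs : s ≤ 3) : majorant φ s = φ s := if_pos hs

theorem majorant_of_lt (φ : ℝ → ℝ) {s : ℝ} (hs : 3 < s) :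
    majorant φ s = exp (1 - 4 * s / 3) := if_neg hs.not_ge

theorem integrableOn_majorant_Ioi (φ : ℝ → ℝ) {a : ℝ} (ha : 3 ≤ a) :
    IntegrableOn (majorant φ) (Ioi a) :=
  (integrableOn_exp_one_sub_Ioi a).congr_fun
    (fun _ hs => (majorant_of_lt φ (ha.trans_lt hs)).symm) measurableSet_Ioi

theorem integrableOn_majorant {φ : ℝ → ℝ} {a : ℝ} (hφ : IntegrableOn φ (Ioc a 3)) :
    IntegrableOn (majorant φ) (Ioi a) := by
  rcases le_or_gt a 3 with ha | ha
  · rw [← Ioc_union_Ioi_eq_Ioi ha]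
    exact (hφ.congr_fun (fun s hs => (majorant_of_le φ hs.2).symm) measurableSet_Ioc).union
      (integrableOn_majorant_Ioi φ le_rfl)
  · exact integrableOn_majorant_Ioi φ ha.le

theorem integral_majorant_of_three_le (φ : ℝ → ℝ) {a : ℝ} (ha : 3 ≤ a) :
    ∫ s in Ioi a, majorant φ s = 3 / 4 * exp (1 - 4 * a / 3) := by
  rw [← integral_exp_one_sub_Ioi]
  exact setIntegral_congr_fun measurableSet_Ioi
    (fun s hs => majorant_of_lt φ (ha.trans_lt hs))

theorem integral_majorant_of_le_three {φ : ℝ → ℝ} {a : ℝ} (hφ : IntegrableOn φ (Ioc a 3))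
    (ha : a ≤ 3) : ∫ s in Ioi a, majorant φ s = (∫ s in a..3, φ s) + 3 / 4 * exp (-3) := by
  rw [← intervalIntegral.integral_interval_add_Ioi (integrableOn_majorant hφ)
    (integrableOn_majorant_Ioi φ le_rfl), integral_majorant_of_three_le φ le_rfl,
    intervalIntegral.integral_of_le ha, intervalIntegral.integral_of_le ha,
    setIntegral_congr_fun measurableSet_Ioc (fun s hs => majorant_of_le φ hs.2)]
  norm_num

theorem oddMajorant_nonneg {s : ℝ} (hs : 0 ≤ s) : 0 ≤ oddMajorant s := by
  unfold oddMajorant majorant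
  split_ifs <;> positivity

theorem evenMajorant_nonneg (s : ℝ) : 0 ≤ evenMajorant s := by
  unfold evenMajorant majorant
  split_ifs <;> positivity

theorem mul_oddMajorant {s : ℝ} (h0 : 0 < s) (h3 : s ≤ 3) : s * oddMajorant s = exp (-2) := by
  rw [oddMajorant, majorant_of_le _ h3, mul_div_cancel₀ _ h0.ne']

theorem integrableOn_Ioc_exp_neg_two_div {a : ℝ} (ha : 0 < a) :
    IntegrableOn (fun s => exp (-2) / s) (Ioc a 3) :=
  (ContinuousOn.integrableOn_Icc (continuousOn_const.div continuousOn_id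
    fun _ hs => (ha.trans_le hs.1).ne')).mono_set Ioc_subset_Icc_self

theorem integrableOn_oddMajorant {a : ℝ} (ha : 0 < a) : IntegrableOn oddMajorant (Ioi a) :=
  integrableOn_majorant (integrableOn_Ioc_exp_neg_two_div ha)

theorem integrableOn_Ioc_exp_neg (a : ℝ) : IntegrableOn (fun s => exp (-s)) (Ioc a 3) :=
  (by fun_prop : Continuous fun s : ℝ => exp (-s)).integrableOn_Icc.mono_set Ioc_subset_Icc_self

theorem integrableOn_evenMajorant (a : ℝ) : IntegrableOn evenMajorant (Ioi a) :=
  integrableOn_majorant (integrableOn_Ioc_exp_neg a)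

theorem integral_oddMajorant {a : ℝ} (ha : 0 < a) (ha3 : a ≤ 3) :
    ∫ s in Ioi a, oddMajorant s = exp (-2) * log (3 / a) + 3 / 4 * exp (-3) := by
  rw [oddMajorant, integral_majorant_of_le_three (integrableOn_Ioc_exp_neg_two_div ha) ha3]
  simp only [div_eq_mul_inv, intervalIntegral.integral_const_mul,
    integral_inv_of_pos ha (by norm_num : (0:ℝ) < 3)]

theorem integral_evenMajorant {a : ℝ} (ha3 : a ≤ 3) :
    ∫ s in Ioi a, evenMajorant s = exp (-a) - 1 / 4 * exp (-3) := by
  rw [evenMajorant, integral_majorant_of_le_three (integrableOn_Ioc_exp_neg a) ha3,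
    intervalIntegral.integral_comp_neg (fun s => exp s), integral_exp]
  ring

theorem mul_log_two_le_log_sub_one {s : ℝ} (h2 : 2 ≤ s) (h3 : s ≤ 3) :
    (s - 2) * log 2 ≤ log (s - 1) := by
  have := strictConcaveOn_log_Ioi.concaveOn.2 (show (1:ℝ) ∈ Ioi 0 by norm_num)
    (show (2:ℝ) ∈ Ioi 0 by norm_num) (show 0 ≤ 3 - s by linarith) (show 0 ≤ s - 2 by linarith)
    (by ring)
  rw [show s - 1 = (3 - s) • (1:ℝ) + (s - 2) • (2:ℝ) by simp only [smul_eq_mul]; ring]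
  simpa only [smul_eq_mul, log_one, mul_zero, zero_add] using this

theorem integral_oddMajorant_sub_one_le_of_le_three {s : ℝ} (h2 : 2 ≤ s) (h3 : s ≤ 3) :
    ∫ u in Ioi (s - 1), oddMajorant u ≤ 0.9214 * s * exp (-s) := by
  rw [integral_oddMajorant (by linarith) (by linarith)]
  have hexp : (1 - (s - 2) / 3) ^ 3 ≤ exp (-(s - 2)) := by
    exact_mod_cast one_sub_div_pow_le_exp_neg (n := 3) (t := s - 2) (by norm_num; linarith)
  have hlog : log (3 / (s - 1)) ≤ 1.0986123 - (s - 2) * 0.6931471 := by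
    rw [log_div (by norm_num) (by linarith)]
    nlinarith [mul_log_two_le_log_sub_one h2 h3, log_three_lt_d9, log_two_gt_d9]
  have hpoly : 1.0986123 - (s - 2) * 0.6931471 + 3 / 4 * 0.3678795 ≤
      0.9214 * s * (1 - (s - 2) / 3) ^ 3 := by
    nlinarith [mul_nonneg (sub_nonneg.2 h2) (sub_nonneg.2 h3), sq_nonneg (s - 2), sq_nonneg (3 - s)]
  calc exp (-2) * log (3 / (s - 1)) + 3 / 4 * exp (-3)
      = exp (-2) * (log (3 / (s - 1)) + 3 / 4 * exp (-1)) := by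
        rw [mul_add, ← mul_assoc, mul_comm _ (3 / 4 : ℝ), mul_assoc, ← exp_add]; norm_num
    _ ≤ exp (-2) * (0.9214 * s * exp (-(s - 2))) := by
        gcongr
        nlinarith [exp_neg_one_lt_d9]
    _ = 0.9214 * s * exp (-s) := by rw [mul_left_comm, ← exp_add]; ring_nf

theorem integral_oddMajorant_sub_one_le_of_le_four {s : ℝ} (h3 : 3 ≤ s) (h4 : s ≤ 4) :
    ∫ u in Ioi (s - 1), oddMajorant u ≤ 0.9214 * s * exp (1 - 4 * s / 3) := by
  rw [integral_oddMajorant (by linarith) (by linarith)]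
  have hs1 : 0 < s - 1 := by linarith
  have hexp : (1 - 4 * (s - 3) / 3 / 6) ^ 6 ≤ exp (-(4 * (s - 3) / 3)) := by
    exact_mod_cast one_sub_div_pow_le_exp_neg (n := 6) (t := 4 * (s - 3) / 3) (by norm_num; linarith)
  have hlog : log (3 / (s - 1)) * (s - 1) ≤ 4 - s := by
    have := log_le_sub_one_of_pos (div_pos three_pos hs1)
    calc log (3 / (s - 1)) * (s - 1) ≤ (3 / (s - 1) - 1) * (s - 1) := by gcongr
      _ = 4 - s := by field_simp; ring
  have hpoly : 2.7182819 * (4 - s) + 3 / 4 * (s - 1) ≤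
      0.9214 * s * (1 - 4 * (s - 3) / 3 / 6) ^ 6 * (s - 1) := by
    have h0 : 0 ≤ s - 3 := by linarith
    nlinarith [mul_nonneg h0 (sub_nonneg.2 h4), pow_nonneg h0 2, pow_nonneg h0 3, pow_nonneg h0 4,
      pow_nonneg h0 5, pow_nonneg h0 6, pow_nonneg h0 7, pow_nonneg h0 8]
  calc exp (-2) * log (3 / (s - 1)) + 3 / 4 * exp (-3)
      = exp (-3) * (exp 1 * log (3 / (s - 1)) + 3 / 4) := by
        rw [mul_add, ← mul_assoc, ← exp_add]; norm_num; ring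
    _ ≤ exp (-3) * (0.9214 * s * exp (-(4 * (s - 3) / 3))) := by
        gcongr
        have hL : 0 ≤ log (3 / (s - 1)) := log_nonneg (by rw [le_div_iff₀ hs1]; linarith)
        refine le_of_mul_le_mul_right ?_ hs1
        calc (exp 1 * log (3 / (s - 1)) + 3 / 4) * (s - 1)
            = exp 1 * (log (3 / (s - 1)) * (s - 1)) + 3 / 4 * (s - 1) := by ring
          _ ≤ 2.7182819 * (4 - s) + 3 / 4 * (s - 1) := by
            linarith [mul_le_mul (by linarith [exp_one_lt_d9] : exp 1 ≤ 2.7182819) hlog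
              (mul_nonneg hL hs1.le) (by norm_num)]
          _ ≤ 0.9214 * s * (1 - 4 * (s - 3) / 3 / 6) ^ 6 * (s - 1) := hpoly
          _ ≤ 0.9214 * s * exp (-(4 * (s - 3) / 3)) * (s - 1) := by gcongr
    _ = 0.9214 * s * exp (1 - 4 * s / 3) := by rw [mul_left_comm, ← exp_add]; ring_nf

theorem integral_evenMajorant_sub_one_le_of_le_four {s : ℝ} (h3 : 3 ≤ s) (h4 : s ≤ 4) :
    ∫ u in Ioi (s - 1), evenMajorant u ≤ 0.9214 * s * exp (1 - 4 * s / 3) := by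
  rw [integral_evenMajorant (by linarith)]
  set x := exp (-(s - 3)) with hx
  have hx0 : 0 < x := exp_pos _
  have hxt : x * (s - 2) ≤ 1 := by
    have h := add_one_le_exp (s - 3)
    have h1 : x * exp (s - 3) = 1 := by rw [hx, ← exp_add]; simp
    nlinarith
  have hy : 1 - (s - 3) / 3 ≤ exp (-(s - 3) / 3) := by
    linarith [add_one_le_exp (-(s - 3) / 3)]
  have hc : 4 * (exp 1 - 0.9214 * s * (1 - (s - 3) / 3)) ≤ s - 2 := by
    nlinarith [exp_one_lt_d9]
  -- With `t = s - 3`: `e^{-4t/3} ≥ e^{-t}(1 - t/3)` and `e^{-t}(1 + t) ≤ 1`.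
  have key : exp 1 * x - 1 / 4 ≤ 0.9214 * s * (x * exp (-(s - 3) / 3)) := by
    have : 0.9214 * s * (x * (1 - (s - 3) / 3)) ≤ 0.9214 * s * (x * exp (-(s - 3) / 3)) := by
      gcongr
    nlinarith [mul_nonneg hx0.le (sub_nonneg.2 hc)]
  calc exp (-(s - 1)) - 1 / 4 * exp (-3) = exp (-3) * (exp 1 * x - 1 / 4) := by
        rw [mul_sub, ← mul_assoc, ← exp_add, hx, ← exp_add]; ring_nf
    _ ≤ exp (-3) * (0.9214 * s * (x * exp (-(s - 3) / 3))) := by gcongr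
    _ = 0.9214 * s * exp (1 - 4 * s / 3) := by
        rw [hx, ← exp_add, mul_left_comm, ← exp_add]; ring_nf

theorem integral_majorant_sub_one_le_of_four_le (φ : ℝ → ℝ) {s : ℝ} (h4 : 4 ≤ s) :
    ∫ u in Ioi (s - 1), majorant φ u ≤ 0.9214 * s * exp (1 - 4 * s / 3) := by
  rw [integral_majorant_of_three_le φ (by linarith)]
  -- `e^{4/3} ≤ 3e/2` since `e^{-1/3} ≥ 2/3`, and `(3/4)(3e/2) < 4 · 0.9214`.
  have hy : 2 / 3 ≤ exp (-1 / 3) := by linarith [add_one_le_exp (-1 / 3)]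
  have hprod : exp (1 - 4 * (s - 1) / 3) * exp (-1 / 3) = exp 1 * exp (1 - 4 * s / 3) := by
    rw [← exp_add, ← exp_add]; ring_nf
  have hA := exp_pos (1 - 4 * (s - 1) / 3)
  have hB := exp_pos (1 - 4 * s / 3)
  nlinarith [mul_nonneg hA.le (sub_nonneg.2 hy), mul_nonneg hB.le (sub_nonneg.2 h4),
    mul_nonneg hB.le (sub_nonneg.2 exp_one_lt_d9.le)]

theorem integral_oddMajorant_sub_one_le {s : ℝ} (h2 : 2 ≤ s) :
    ∫ u in Ioi (s - 1), oddMajorant u ≤ 0.9214 * s * evenMajorant s := by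
  rcases le_or_gt s 3 with h3 | h3
  · rw [evenMajorant, majorant_of_le _ h3]
    exact integral_oddMajorant_sub_one_le_of_le_three h2 h3
  rw [evenMajorant, majorant_of_lt _ h3]
  rcases le_or_gt s 4 with h4 | h4
  · exact integral_oddMajorant_sub_one_le_of_le_four h3.le h4
  · exact integral_majorant_sub_one_le_of_four_le _ h4.le

theorem integral_evenMajorant_sub_one_le {s : ℝ} (h3 : 3 ≤ s) :
    ∫ u in Ioi (s - 1), evenMajorant u ≤ 0.9214 * s * oddMajorant s := by
  rcases h3.eq_or_lt with rfl | h3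
  · rw [mul_assoc, mul_oddMajorant three_pos le_rfl, integral_evenMajorant (by norm_num),
      show (-3 : ℝ) = -2 + -1 by norm_num, exp_add]
    nlinarith [exp_neg_one_gt_d9, exp_pos (-2)]
  rw [oddMajorant, majorant_of_lt _ h3]
  rcases le_or_gt s 4 with h4 | h4
  · exact integral_evenMajorant_sub_one_le_of_le_four h3.le h4
  · exact integral_majorant_sub_one_le_of_four_le _ h4.le

theorem majorant_le_hfun (φ : ℝ → ℝ) {s : ℝ} (hs : 3 < s) : majorant φ s ≤ hfun s := by
  rw [hfun, if_neg (by linarith), if_neg hs.not_ge, majorant_of_lt _ hs, div_mul_eq_mul_div,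
    le_div_iff₀ (by linarith)]
  have : s ≤ 3 * exp ((s - 3) / 3) := by linarith [add_one_le_exp ((s - 3) / 3)]
  calc exp (1 - 4 * s / 3) * s ≤ exp (1 - 4 * s / 3) * (3 * exp ((s - 3) / 3)) := by gcongr
    _ = 3 * exp (-s) := by rw [mul_left_comm, ← exp_add]; ring_nf

theorem exp_neg_two_div_le_exp_neg {s : ℝ} (h2 : 2 ≤ s) (h3 : s ≤ 3) :
    exp (-2) / s ≤ exp (-s) := by
  rw [div_le_iff₀ (by linarith)]
  refine le_of_mul_le_mul_right ?_ (exp_pos (3 - s))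
  calc exp (-2) * exp (3 - s) = exp (-s) * exp 1 := by rw [← exp_add, ← exp_add]; ring_nf
    _ ≤ exp (-s) * (s * (4 - s)) := by gcongr; nlinarith [exp_one_lt_d9]
    _ ≤ exp (-s) * s * exp (3 - s) := by
        rw [mul_assoc]
        gcongr
        linarith [add_one_le_exp (3 - s)]

theorem oddMajorant_le_hfun {s : ℝ} (hs : 1 ≤ s) : oddMajorant s ≤ hfun s := by
  rcases le_or_gt s 3 with h3 | h3
  · rw [oddMajorant, majorant_of_le _ h3, hfun, if_pos h3]
    split_ifs with h2
    · exact div_le_self (exp_pos _).le hs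
    · exact exp_neg_two_div_le_exp_neg (not_le.1 h2).le h3
  · exact majorant_le_hfun _ h3

theorem evenMajorant_le_hfun {s : ℝ} (hs : 2 ≤ s) : evenMajorant s ≤ hfun s := by
  rcases le_or_gt s 3 with h3 | h3
  · rw [evenMajorant, majorant_of_le _ h3, hfun, if_pos h3]
    split_ifs with h2
    · rw [le_antisymm h2 hs]
    · exact le_rfl
  · exact majorant_le_hfun _ h3

theorem le_two_mul_exp_two_mul_oddMajorant {f : ℝ → ℝ} (hf1a : ∀ s : ℝ, 1 ≤ s → s ≤ 3 → f s = (3 - s) / s)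
    (hf1b : ∀ s : ℝ, 3 < s → f s = 0) {s : ℝ} (hs : 1 ≤ s) :
    f s ≤ 2 * exp 2 * oddMajorant s := by
  rcases le_or_gt s 3 with h3 | h3
  · rw [hf1a s hs h3, oddMajorant, majorant_of_le _ h3, ← mul_div_assoc, mul_assoc, ← exp_add]
    norm_num
    gcongr
    linarith
  · rw [hf1b s h3]
    exact mul_nonneg (by positivity) (oddMajorant_nonneg (by linarith))

theorem le_evenMajorant_of_le_oddMajorant {f g : ℝ → ℝ} {C : ℝ} (hC : 0 ≤ C)
    (hg : ∀ u, 1 ≤ u → g u ≤ C * oddMajorant u)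
    (hrec : ∀ s, 2 ≤ s → s * f s = ∫ t in Ioi s, g (t - 1)) {s : ℝ} (hs : 2 ≤ s) :
    f s ≤ C * 0.9214 * evenMajorant s := by
  refine le_of_mul_le_mul_left ?_ (by linarith : (0:ℝ) < s)
  calc s * f s = ∫ t in Ioi s, g (t - 1) := hrec s hs
    _ ≤ C * ∫ u in Ioi (s - 1), oddMajorant u :=
        integral_comp_sub_one_le_mul_integral hC (integrableOn_oddMajorant (by linarith))
          (fun u hu => oddMajorant_nonneg (by linarith [mem_Ioi.1 hu]))
          (fun u hu => hg u (by linarith [mem_Ioi.1 hu]))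
    _ ≤ C * (0.9214 * s * evenMajorant s) := by gcongr; exact integral_oddMajorant_sub_one_le hs
    _ = s * (C * 0.9214 * evenMajorant s) := by ring

theorem le_oddMajorant_of_le_evenMajorant {f g : ℝ → ℝ} {C : ℝ} (hC : 0 ≤ C)
    (hg : ∀ u, 2 ≤ u → g u ≤ C * evenMajorant u)
    (hrec : ∀ s, 3 ≤ s → s * f s = ∫ t in Ioi s, g (t - 1))
    (hflat : ∀ s, 1 ≤ s → s ≤ 3 → s * f s = 3 * f 3) {s : ℝ} (hs : 1 ≤ s) :
    f s ≤ C * 0.9214 * oddMajorant s := by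
  have hbound : ∀ s, 3 ≤ s → s * f s ≤ s * (C * 0.9214 * oddMajorant s) := fun s hs => calc
    s * f s = ∫ t in Ioi s, g (t - 1) := hrec s hs
    _ ≤ C * ∫ u in Ioi (s - 1), evenMajorant u :=
        integral_comp_sub_one_le_mul_integral hC (integrableOn_evenMajorant _)
          (fun u _ => evenMajorant_nonneg u) (fun u hu => hg u (by linarith [mem_Ioi.1 hu]))
    _ ≤ C * (0.9214 * s * oddMajorant s) := by gcongr; exact integral_evenMajorant_sub_one_le hs
    _ = s * (C * 0.9214 * oddMajorant s) := by ring
  have hs0 : 0 < s := by linarith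
  refine le_of_mul_le_mul_left ?_ hs0
  rcases le_or_gt s 3 with h3 | h3
  · calc s * f s = 3 * f 3 := hflat s hs h3
      _ ≤ 3 * (C * 0.9214 * oddMajorant 3) := hbound 3 le_rfl
      _ = s * (C * 0.9214 * oddMajorant s) := by
        rw [mul_left_comm, mul_oddMajorant three_pos le_rfl, mul_left_comm s,
          mul_oddMajorant hs0 h3]
  · exact hbound s h3.le

theorem fseq_le_mul_majorant (fseq : ℕ → ℝ → ℝ)
    (hf1a : ∀ s : ℝ, 1 ≤ s → s ≤ 3 → fseq 1 s = (3 - s) / s)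
    (hf1b : ∀ s : ℝ, 3 < s → fseq 1 s = 0)
    (hfrec : ∀ n : ℕ, 2 ≤ n → ∀ s : ℝ, (Even n ∧ 2 ≤ s) ∨ (Odd n ∧ 3 ≤ s) →
      s * fseq n s = ∫ t in Ioi s, fseq (n - 1) (t - 1))
    (hfodd : ∀ n : ℕ, 2 ≤ n → Odd n → ∀ s : ℝ, 1 ≤ s → s ≤ 3 →
      s * fseq n s = 3 * fseq n 3) (n : ℕ) (hn : 1 ≤ n) :
    (Odd n → ∀ s, 1 ≤ s → fseq n s ≤ 2 * exp 2 * 0.9214 ^ (n - 1) * oddMajorant s) ∧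
    (Even n → ∀ s, 2 ≤ s → fseq n s ≤ 2 * exp 2 * 0.9214 ^ (n - 1) * evenMajorant s) := by
  induction n, hn using Nat.le_induction with
  | base => exact ⟨fun _ s hs => by simpa using le_two_mul_exp_two_mul_oddMajorant hf1a hf1b hs,
    fun h => absurd h Nat.not_even_one⟩
  | succ n hn ih =>
    have hK : (2 * exp 2 * 0.9214 ^ (n + 1 - 1) : ℝ) = 2 * exp 2 * 0.9214 ^ (n - 1) * 0.9214 := by
      rw [Nat.add_sub_cancel, mul_assoc (2 * exp 2), ← pow_succ, Nat.sub_add_cancel hn]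
    have hrec := hfrec (n + 1) (by omega)
    rw [hK]
    refine ⟨fun hodd s hs => ?_, fun heven s hs => ?_⟩
    · have heven : Even n := by simpa [Nat.odd_add_one] using hodd
      exact le_oddMajorant_of_le_evenMajorant (by positivity) (ih.2 heven)
        (fun s h => hrec s (Or.inr ⟨hodd, h⟩)) (hfodd (n + 1) (by omega) hodd) hs
    · have hodd : Odd n := by simpa [Nat.even_add_one] using heven
      exact le_evenMajorant_of_le_oddMajorant (by positivity) (ih.1 hodd)
        (fun s h => hrec s (Or.inl ⟨heven, h⟩)) hs

/-- Theorem 2.4: if `(f_n)` solves the integral–difference equation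
(`f₁(s) = (3-s)/s` on `[1,3]`, `f₁ = 0` beyond `3`;
`s f_n(s) = ∫_s^∞ f_{n-1}(t-1) dt` for even `n ≥ 2` with `s ≥ 2` or odd `n ≥ 2` with
`s ≥ 3`; and `s f_n(s) = 3 f_n(3)` for odd `n ≥ 2` and `1 ≤ s ≤ 3`), then for every
`n ≥ 1` one has `f_n(s) ≤ 2 e² (0.9214)^{n-1} h(s)`, for all `s ≥ 1` when `n` is odd
and all `s ≥ 2` when `n` is even. -/
theorem fseq_le_hfun (fseq : ℕ → ℝ → ℝ)
    (hf1a : ∀ s : ℝ, 1 ≤ s → s ≤ 3 → fseq 1 s = (3 - s) / s)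
    (hf1b : ∀ s : ℝ, 3 < s → fseq 1 s = 0)
    (hfrec : ∀ n : ℕ, 2 ≤ n → ∀ s : ℝ, (Even n ∧ 2 ≤ s) ∨ (Odd n ∧ 3 ≤ s) →
      s * fseq n s = ∫ t in Set.Ioi s, fseq (n - 1) (t - 1))
    (hfodd : ∀ n : ℕ, 2 ≤ n → Odd n → ∀ s : ℝ, 1 ≤ s → s ≤ 3 →
      s * fseq n s = 3 * fseq n 3) :
    ∀ n : ℕ, 1 ≤ n → ∀ s : ℝ, (Odd n ∧ 1 ≤ s) ∨ (Even n ∧ 2 ≤ s) →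
      fseq n s ≤ 2 * Real.exp 2 * (0.9214 : ℝ) ^ (n - 1) * hfun s := by
  intro n hn s hs
  have hK : (0 : ℝ) ≤ 2 * exp 2 * 0.9214 ^ (n - 1) := by positivity
  obtain ⟨hodd, heven⟩ := fseq_le_mul_majorant fseq hf1a hf1b hfrec hfodd n hn
  rcases hs with ⟨hn', hs⟩ | ⟨hn', hs⟩
  · exact (hodd hn' s hs).trans (mul_le_mul_of_nonneg_left (oddMajorant_le_hfun hs) hK)
  · exact (heven hn' s hs).trans (mul_le_mul_of_nonneg_left (evenMajorant_le_hfun hs) hK)
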